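/- Let R̄ be a braid-equation operator on W⊗W with R̄₁₃ := R̄₁₂R̄₂₃R̄₁₂ = R̄₂₃R̄₁₂R̄₂₃. If x ∈ W^{⊗3} satisfies R̄₁₃x = λx, (R̄₂₃R̄₁₂ − R̄₂₃ + 1)x = 0 and (R̄₁₂R̄₂₃ − R̄₁₂ + 1)x = 0, then (λ+1)x satisfies R̄₁₃x = −x; i.e., λ = −1 or x = 0. -/

import Mathlib

open TensorProduct

variable {k : Type*} [Field k] {W : Type*} [AddCommGroup W] [Module k W]

/-- The operator `R̄ ⊗ id` acting on `W ⊗ W ⊗ W` (associated as `W ⊗ (W ⊗ W)`). -/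
noncomputable def R₁₂ (R : Module.End k (W ⊗[k] W)) :
    Module.End k (W ⊗[k] (W ⊗[k] W)) :=
  (TensorProduct.assoc k W W W).toLinearMap ∘ₗ
    TensorProduct.map R LinearMap.id ∘ₗ (TensorProduct.assoc k W W W).symm.toLinearMap

/-- The operator `id ⊗ R̄` acting on `W ⊗ W ⊗ W`. -/
noncomputable def R₂₃ (R : Module.End k (W ⊗[k] W)) :
    Module.End k (W ⊗[k] (W ⊗[k] W)) :=
  TensorProduct.map LinearMap.id R

/-- The operator Φ of Lemma 3.2. -/
noncomputable def Phi (R : Module.End k (W ⊗[k] W)) :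
    Module.End k (W ⊗[k] (W ⊗[k] W)) :=
  R₁₂ R * R₂₃ R * R₁₂ R - R₁₂ R * R₂₃ R - R₂₃ R * R₁₂ R + R₁₂ R + R₂₃ R - 1

namespace Module.End

variable {S M : Type*} [Semiring S] [AddCommGroup M] [Module S M]

theorem mul_mul_apply_eq_neg_of_apply_eq_zero {A B : Module.End S M} {x : M}
    (hBA : (B * A - B + 1) x = 0) (hAB : (A * B - A + 1) x = 0) :
    (A * B * A) x = -x := by
  simp only [LinearMap.sub_apply, LinearMap.add_apply, one_apply, mul_apply] at hBA hAB ⊢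
  have hBA' : B (A x) = B x - x := by linear_combination (norm := module) hBA
  have hAB' : A (B x) = A x - x := by linear_combination (norm := module) hAB
  rw [hBA', map_sub, hAB', sub_sub_cancel_left]

end Module.End

theorem eq_neg_one_or_eq_zero_of_smul_eq_neg {S M : Type*} [Ring S] [AddCommGroup M] [Module S M]
    [NoZeroSMulDivisors S M] {μ : S} {x : M} (h : μ • x = -x) : μ = -1 ∨ x = 0 := by
  have hsum : (μ + 1) • x = 0 := by rw [add_smul, one_smul, h, neg_add_cancel]
  exact (eq_zero_or_eq_zero_of_smul_eq_zero hsum).imp_left eq_neg_of_add_eq_zero_left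

theorem stmt_9_general (R : Module.End k (W ⊗[k] W)) (μ : k)
    (x : W ⊗[k] (W ⊗[k] W))
    (hx : (R₁₂ R * R₂₃ R * R₁₂ R) x = μ • x)
    (h1 : (R₂₃ R * R₁₂ R - R₂₃ R + 1) x = 0)
    (h2 : (R₁₂ R * R₂₃ R - R₁₂ R + 1) x = 0) :
    μ = -1 ∨ x = 0 :=
  eq_neg_one_or_eq_zero_of_smul_eq_neg <|
    hx ▸ Module.End.mul_mul_apply_eq_neg_of_apply_eq_zero h1 h2

theorem stmt_9 (R : Module.End k (W ⊗[k] W)) (μ : k)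
    (hbraid : R₁₂ R * R₂₃ R * R₁₂ R = R₂₃ R * R₁₂ R * R₂₃ R)
    (x : W ⊗[k] (W ⊗[k] W))
    (hx : (R₁₂ R * R₂₃ R * R₁₂ R) x = μ • x)
    (h1 : (R₂₃ R * R₁₂ R - R₂₃ R + 1) x = 0)
    (h2 : (R₁₂ R * R₂₃ R - R₁₂ R + 1) x = 0) :
    μ = -1 ∨ x = 0 :=
  stmt_9_general R μ x hx h1 h2
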